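/- arXiv:2012.14464 — 3 statements merged into one kernel-verified Lean document; each statement's English description precedes it below -/
import Mathlib

section
/- In a deterministic goal-reaching decision process where from every non-goal state some action decreases dist by exactly 1 and every action decreases dist by at most 1, with shaped rewards r'(s, a, s') = 1_{goal}(s') + γ·γ^{dist(s')} − γ^{dist(s)} where goal states use potential c satisfying 1 + γc = γ, the optimal value function satisfies V*(s) = 0 for all non-goal states s, where V*(s) = sup over action sequences of the discounted sum of shaped rewards. -/
open Classical in
/-- Trajectory of a deterministic decision process under an action sequence. -/
def detTraj {S A : Type*} (step : S → A → S) (s : S) (as : ℕ → A) : ℕ → S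
  | 0 => s
  | n + 1 => step (detTraj step s as n) (as n)

open Classical in
/-- Shaped one-step reward `1_goal(s') + γ·Pot(s') − Pot(s)` with
`Pot x = γ^(dist x)` on non-goals and `Pot = c` on goals. -/
noncomputable def shapedStepReward {S A : Type*} (γ c : ℝ) (goal : S → Prop)
    (dist : S → ℕ) (step : S → A → S) (s : S) (a : A) : ℝ :=
  (if goal (step s a) then (1 : ℝ) else 0)
    + γ * (if goal (step s a) then c else γ ^ dist (step s a))
    - (if goal s then c else γ ^ dist s)

open Classical in
/-- Discounted shaped return of an action sequence from `s`: episodes terminate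
upon first reaching a goal; otherwise the infinite discounted sum is taken. -/
noncomputable def shapedReturn {S A : Type*} (γ c : ℝ) (goal : S → Prop)
    (dist : S → ℕ) (step : S → A → S) (s : S) (as : ℕ → A) : ℝ :=
  if h : ∃ n, goal (detTraj step s as n) then
    ∑ k ∈ Finset.range (Nat.find h),
      γ ^ k * shapedStepReward γ c goal dist step (detTraj step s as k) (as k)
  else
    ∑' k : ℕ, γ ^ k * shapedStepReward γ c goal dist step (detTraj step s as k) (as k)

/-!
Because a goal has distance `0` and its potential `c` satisfies `1 + γ c = γ = γ · γ ^ 0`, every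
step taken from a non-goal state `t` to `t'` earns exactly `γ ^ (dist t' + 1) - γ ^ dist t`.
Distances drop by at most one per step, so this reward is never positive, and it vanishes on a
step that does drop the distance by one. Hence every return is `≤ 0`, and following such a
greedy step from every state yields return `0`.
-/

section ShapedReturn

variable {S A : Type*} {γ c : ℝ} {goal : S → Prop} {dist : S → ℕ} {step : S → A → S}

theorem detTraj_iterate (π : S → A) (s : S) (n : ℕ) :
    detTraj step s (fun k => π ((fun x => step x (π x))^[k] s)) n
      = (fun x => step x (π x))^[n] s := by
  induction n with
  | zero => rfl
  | succ n ih => simp only [detTraj, ih, Function.iterate_succ_apply']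

theorem shapedStepReward_of_not_goal (hc : 1 + γ * c = γ) (hgoal : ∀ s, goal s → dist s = 0)
    {t : S} (ht : ¬ goal t) (a : A) :
    shapedStepReward γ c goal dist step t a = γ ^ (dist (step t a) + 1) - γ ^ dist t := by
  by_cases hg : goal (step t a)
  · simp only [shapedStepReward, if_pos hg, if_neg ht, hgoal _ hg]
    linear_combination hc
  · simp only [shapedStepReward, if_neg hg, if_neg ht]
    ring

theorem shapedStepReward_nonpos (hγ0 : 0 ≤ γ) (hγ1 : γ ≤ 1) (hc : 1 + γ * c = γ)
    (hgoal : ∀ s, goal s → dist s = 0) (hlip : ∀ s a, dist s ≤ dist (step s a) + 1)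
    {t : S} (ht : ¬ goal t) (a : A) :
    shapedStepReward γ c goal dist step t a ≤ 0 := by
  rw [shapedStepReward_of_not_goal hc hgoal ht, sub_nonpos]
  exact pow_le_pow_of_le_one hγ0 hγ1 (hlip t a)

theorem shapedStepReward_eq_zero (hc : 1 + γ * c = γ) (hgoal : ∀ s, goal s → dist s = 0)
    {t : S} (ht : ¬ goal t) {a : A} (ha : dist (step t a) + 1 = dist t) :
    shapedStepReward γ c goal dist step t a = 0 := by
  rw [shapedStepReward_of_not_goal hc hgoal ht, ha, sub_self]

theorem shapedReturn_nonpos (hγ0 : 0 ≤ γ) {s : S} {as : ℕ → A}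
    (hr : ∀ k, ¬ goal (detTraj step s as k) →
      shapedStepReward γ c goal dist step (detTraj step s as k) (as k) ≤ 0) :
    shapedReturn γ c goal dist step s as ≤ 0 := by
  classical
  unfold shapedReturn
  split_ifs with h
  · refine Finset.sum_nonpos fun k hk => ?_
    exact mul_nonpos_of_nonneg_of_nonpos (pow_nonneg hγ0 k)
      (hr k (Nat.find_min h (Finset.mem_range.mp hk)))
  · rw [not_exists] at h
    exact tsum_nonpos fun k => mul_nonpos_of_nonneg_of_nonpos (pow_nonneg hγ0 k) (hr k (h k))

theorem shapedReturn_eq_zero {s : S} {as : ℕ → A}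
    (hr : ∀ k, ¬ goal (detTraj step s as k) →
      shapedStepReward γ c goal dist step (detTraj step s as k) (as k) = 0) :
    shapedReturn γ c goal dist step s as = 0 := by
  classical
  unfold shapedReturn
  split_ifs with h
  · refine Finset.sum_eq_zero fun k hk => ?_
    rw [hr k (Nat.find_min h (Finset.mem_range.mp hk)), mul_zero]
  · rw [not_exists] at h
    simp [hr _ (h _)]

end ShapedReturn

/-- Theorem 2: with potential `γ^dist` and goal potential `c` with `1 + γ c = γ`,
the optimal value of every non-goal state is `0` (the supremum over action
sequences of the discounted shaped return is attained and equals `0`). -/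
theorem optimal_value_zero {S A : Type*} (γ c : ℝ) (hγ0 : 0 < γ) (hγ1 : γ < 1)
    (hc : 1 + γ * c = γ)
    (goal : S → Prop) (dist : S → ℕ) (step : S → A → S)
    (hdist0 : ∀ s, dist s = 0 ↔ goal s)
    (hlip : ∀ s a, dist s ≤ dist (step s a) + 1)
    (hex : ∀ s, ¬ goal s → ∃ a, dist (step s a) + 1 = dist s) :
    ∀ s, ¬ goal s →
      IsGreatest {x : ℝ | ∃ as : ℕ → A, x = shapedReturn γ c goal dist step s as} 0 := by
  intro s hs
  have hgoal : ∀ t, goal t → dist t = 0 := fun t => (hdist0 t).mpr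
  obtain ⟨a₀, -⟩ := hex s hs
  have hgreedy : ∀ t, ∃ a, ¬ goal t → dist (step t a) + 1 = dist t := by
    intro t
    by_cases ht : goal t
    · exact ⟨a₀, fun h => absurd ht h⟩
    · exact (hex t ht).imp fun _ ha _ => ha
  choose π hπ using hgreedy
  refine ⟨⟨fun k => π ((fun x => step x (π x))^[k] s), ?_⟩, ?_⟩
  · refine (shapedReturn_eq_zero fun k hk => ?_).symm
    rw [detTraj_iterate] at hk ⊢
    exact shapedStepReward_eq_zero hc hgoal hk (hπ _ hk)
  · rintro x ⟨as, rfl⟩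
    exact shapedReturn_nonpos hγ0.le fun k hk =>
      shapedStepReward_nonpos hγ0.le hγ1.le hc hgoal hlip hk _
end

section
/- The discounted return of any trajectory under the shaped rewards with potential Pot(s) = γ^{dist(s)} and goal handling 1 + γc = γ equals γ^{n} − γ^{dist(s_0)} if the trajectory first reaches a goal at step n (here n ≥ dist(s_0)), and equals −γ^{dist(s_0)} for trajectories that never reach a goal. In particular the return is ≤ 0 for every trajectory, with equality iff the trajectory reaches the goal in exactly dist(s_0) steps. -/
/-- With potential `Pot = γ^dist` (goal potential `c`, `1 + γ c = γ`), the shaped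
discounted return of any trajectory equals `γ^n − γ^(dist s₀)` if it first reaches
a goal at step `n ≥ dist s₀`, and `−γ^(dist s₀)` if it never reaches a goal; in
particular the return is `≤ 0` with equality iff the goal is reached in exactly
`dist s₀` steps. -/
theorem shaped_return_formula {S : Type*} (γ c : ℝ) (hγ0 : 0 < γ) (hγ1 : γ < 1)
    (hc : 1 + γ * c = γ)
    (goal : S → Prop) [DecidablePred goal]
    (dist : S → ℕ) (hdist0 : ∀ x, dist x = 0 ↔ goal x)
    (Pot : S → ℝ) (hPot : ∀ x, Pot x = if goal x then c else γ ^ dist x)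
    (r' : S → S → ℝ)
    (hr' : ∀ x y, r' x y = (if goal y then (1 : ℝ) else 0) + γ * Pot y - Pot x)
    (s : ℕ → S) (hlip : ∀ k, dist (s k) ≤ dist (s (k + 1)) + 1) :
    (∀ n : ℕ, goal (s n) → (∀ k < n, ¬ goal (s k)) →
        dist (s 0) ≤ n ∧
        (∑ k ∈ Finset.range n, γ ^ k * r' (s k) (s (k + 1)))
          = γ ^ n - γ ^ dist (s 0) ∧
        (∑ k ∈ Finset.range n, γ ^ k * r' (s k) (s (k + 1))) ≤ 0 ∧
        ((∑ k ∈ Finset.range n, γ ^ k * r' (s k) (s (k + 1))) = 0 ↔ n = dist (s 0))) ∧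
    ((∀ k, ¬ goal (s k)) →
        HasSum (fun k => γ ^ k * r' (s k) (s (k + 1))) (-γ ^ dist (s 0))) := by
  have hγle : (0:ℝ) ≤ γ := le_of_lt hγ0
  have hd0 : ∀ k, dist (s 0) ≤ dist (s k) + k := by
    intro k
    induction k with
    | zero => simp
    | succ k ih =>
      calc dist (s 0) ≤ dist (s k) + k := ih
        _ ≤ (dist (s (k+1)) + 1) + k := by have := hlip k; omega
        _ = dist (s (k+1)) + (k+1) := by omega
  constructor
  · intro n hgoal hfirst
    have hdn : dist (s n) = 0 := (hdist0 _).mpr hgoal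
    have hle : dist (s 0) ≤ n := by have := hd0 n; omega
    have hsum : (∑ k ∈ Finset.range n, γ ^ k * r' (s k) (s (k + 1)))
        = γ ^ n - γ ^ dist (s 0) := by
      rcases Nat.eq_zero_or_pos n with rfl | hn
      · have : dist (s 0) = 0 := (hdist0 _).mpr hgoal
        simp [this]
      · have key : ∀ k ∈ Finset.range n, γ ^ k * r' (s k) (s (k+1))
            = (if k = n - 1 then γ ^ k else 0)
              + (γ ^ (k+1) * Pot (s (k+1)) - γ ^ k * Pot (s k)) := by
          intro k hk
          rw [Finset.mem_range] at hk
          rw [hr']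
          by_cases h : k = n - 1
          · have hkn : k + 1 = n := by omega
            have hg2 : goal (s (k+1)) := by rw [hkn]; exact hgoal
            rw [if_pos hg2, if_pos h]
            ring
          · have : ¬ goal (s (k+1)) := hfirst (k+1) (by omega)
            rw [if_neg this, if_neg h]
            ring
        rw [Finset.sum_congr rfl key, Finset.sum_add_distrib,
          Finset.sum_range_sub (fun k => γ ^ k * Pot (s k)),
          Finset.sum_ite_eq' (Finset.range n) (n-1) (fun k => γ ^ k)]
        have hmem : n - 1 ∈ Finset.range n := Finset.mem_range.mpr (by omega)
        rw [if_pos hmem]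
        have hP0 : Pot (s 0) = γ ^ dist (s 0) := by
          rw [hPot]; simp [hfirst 0 hn]
        have hPn : Pot (s n) = c := by rw [hPot]; simp [hgoal]
        rw [hP0, hPn]
        have hgn : γ ^ n = γ ^ (n-1) * γ := by
          rw [← pow_succ]; congr 1; omega
        rw [hgn]
        nlinarith [pow_pos hγ0 (n-1)]
    refine ⟨hle, hsum, ?_, ?_⟩
    · rw [hsum]
      have : γ ^ n ≤ γ ^ dist (s 0) :=
        pow_le_pow_of_le_one hγle (le_of_lt hγ1) hle
      linarith
    · rw [hsum]
      constructor
      · intro h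
        by_contra hne
        have hlt : dist (s 0) < n := lt_of_le_of_ne hle (Ne.symm hne)
        have : γ ^ n < γ ^ dist (s 0) :=
          pow_lt_pow_right_of_lt_one₀ hγ0 hγ1 hlt
        linarith
      · intro h; rw [h]; ring
  · intro hng
    have hterm : ∀ k, γ ^ k * r' (s k) (s (k+1))
        = γ ^ ((k+1) + dist (s (k+1))) - γ ^ (k + dist (s k)) := by
      intro k
      rw [hr', hPot, hPot]
      simp only [hng k, hng (k+1), if_neg, ite_false]
      rw [pow_add, pow_add]
      ring
    have hmono : ∀ k, k + dist (s k) ≤ (k+1) + dist (s (k+1)) := by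
      intro k; have := hlip k; omega
    have hnonneg : ∀ k, 0 ≤ -(γ ^ k * r' (s k) (s (k+1))) := by
      intro k
      rw [hterm k]
      have : γ ^ ((k+1) + dist (s (k+1))) ≤ γ ^ (k + dist (s k)) :=
        pow_le_pow_of_le_one hγle (le_of_lt hγ1) (hmono k)
      linarith
    have hpartial : ∀ N, (∑ k ∈ Finset.range N, γ ^ k * r' (s k) (s (k+1)))
        = γ ^ (N + dist (s N)) - γ ^ dist (s 0) := by
      intro N
      rw [Finset.sum_congr rfl (fun k _ => hterm k),
        Finset.sum_range_sub (fun m => γ ^ (m + dist (s m)))]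
      simp
    have htend : Filter.Tendsto (fun N => γ ^ (N + dist (s N))) Filter.atTop (nhds 0) := by
      apply squeeze_zero (fun N => pow_nonneg hγle _)
        (fun N => pow_le_pow_of_le_one hγle (le_of_lt hγ1) (Nat.le_add_right N _))
      exact tendsto_pow_atTop_nhds_zero_of_lt_one hγle hγ1
    have hHS : HasSum (fun k => -(γ ^ k * r' (s k) (s (k+1)))) (γ ^ dist (s 0)) := by
      rw [hasSum_iff_tendsto_nat_of_nonneg hnonneg]
      have heq : (fun N => ∑ k ∈ Finset.range N, -(γ ^ k * r' (s k) (s (k+1))))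
          = fun N => γ ^ dist (s 0) - γ ^ (N + dist (s N)) := by
        funext N
        rw [Finset.sum_neg_distrib, hpartial]
        ring
      rw [heq]
      have : Filter.Tendsto (fun N => γ ^ dist (s 0) - γ ^ (N + dist (s N)))
          Filter.atTop (nhds (γ ^ dist (s 0) - 0)) :=
        Filter.Tendsto.const_sub _ htend
      simpa using this
    have := hHS.neg
    simpa using this
end

section
/- In a finite deterministic goal-reaching problem with shaped rewards given by potential Pot(s) = γ^{dist(s)} (goal handling 1 + γc = γ, 0 < γ < 1), the greedy policy with respect to the shaped one-step rewards (choose any action with shaped reward 0) reaches the goal from any state s in exactly dist(s) steps, i.e., it is an optimal policy for the original sparse-reward problem. -/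
/-- In a finite deterministic goal-reaching problem with `γ^dist` shaped rewards
(`1 + γ c = γ`), any greedy policy (choosing in every non-goal state an action of
shaped one-step reward `0`) reaches the goal from any state `s` in exactly
`dist s` steps, i.e. it is optimal for the original sparse-reward problem. -/
theorem greedy_policy_optimal {S A : Type*} [Fintype S] (γ c : ℝ)
    (hγ0 : 0 < γ) (hγ1 : γ < 1) (hc : 1 + γ * c = γ)
    (goal : S → Prop) [DecidablePred goal]
    (dist : S → ℕ) (step : S → A → S)
    (hdist0 : ∀ s, dist s = 0 ↔ goal s)
    (hlip : ∀ s a, dist s ≤ dist (step s a) + 1)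
    (hex : ∀ s, ¬ goal s → ∃ a, dist (step s a) + 1 = dist s)
    (Pot : S → ℝ) (hPot : ∀ x, Pot x = if goal x then c else γ ^ dist x)
    (π : S → A)
    (hgreedy : ∀ s, ¬ goal s →
      (if goal (step s (π s)) then (1 : ℝ) else 0)
        + γ * Pot (step s (π s)) - Pot s = 0) :
    ∀ s : S,
      goal ((fun x => step x (π x))^[dist s] s) ∧
      ∀ k < dist s, ¬ goal ((fun x => step x (π x))^[k] s) := by
  have hinj : Function.Injective (fun n : ℕ => γ ^ n) :=
    (pow_right_strictAnti₀ hγ0 hγ1).injective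
  -- key: greedy step decreases dist by exactly 1
  have key : ∀ s, ¬ goal s → dist (step s (π s)) + 1 = dist s := by
    intro s hs
    have h := hgreedy s hs
    rw [hPot, hPot, if_neg hs] at h
    by_cases hg : goal (step s (π s))
    · rw [if_pos hg, if_pos hg] at h
      have : γ ^ dist s = γ := by linarith
      have h1 : dist s = 1 := hinj (by simpa using this)
      have h0 : dist (step s (π s)) = 0 := (hdist0 _).mpr hg
      omega
    · rw [if_neg hg, if_neg hg] at h
      have : γ ^ (dist (step s (π s)) + 1) = γ ^ dist s := by
        rw [pow_succ]; ring_nf; ring_nf at h; linarith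
      exact hinj this
  suffices h : ∀ n s, dist s = n →
      goal ((fun x => step x (π x))^[dist s] s) ∧
      ∀ k < dist s, ¬ goal ((fun x => step x (π x))^[k] s) by
    intro s; exact h (dist s) s rfl
  intro n
  induction n with
  | zero =>
    intro s hn
    rw [hn]
    refine ⟨(hdist0 s).mp hn, ?_⟩
    intro k hk; omega
  | succ n ih =>
    intro s hn
    rw [hn]
    have hs : ¬ goal s := by
      intro hg; rw [(hdist0 s).mpr hg] at hn; omega
    have hstep : dist (step s (π s)) = n := by
      have := key s hs; omega
    obtain ⟨h1, h2⟩ := ih (step s (π s)) hstep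
    rw [hstep] at h1 h2
    constructor
    · rw [Function.iterate_succ_apply]; exact h1
    · intro k hk
      cases k with
      | zero => simpa using hs
      | succ m =>
        rw [Function.iterate_succ_apply]
        exact h2 m (by omega)
end
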